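/- For every R > 0 there exists a constant L > 0 such that for all data vectors φ₁, φ₂ ∈ ℝ^M with ‖φ₁‖ ≤ R and ‖φ₂‖ ≤ R, the Hellinger distance between the two posterior distributions, given in terms of their densities with respect to ρ, satisfies (½ ∫_J ( √( Z(φ₁)⁻¹ · exp(−Φ(p,φ₁)) ) − √( Z(φ₂)⁻¹ · exp(−Φ(p,φ₂)) ) )² dρ(p) )^{1/2} ≤ L · ‖φ₁ − φ₂‖_Ξ. That is, the Bayesian posterior depends Lipschitz continuously on the measured data with respect to the Hellinger metric. -/

import Mathlib

open MeasureTheory Real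

/-- The potential `Φ(p,φ) = ½‖φ − G(p)‖_Ξ² − ½‖φ‖_Ξ²` with `‖v‖_Ξ = ξ^{-1/2}‖v‖`. -/
noncomputable def emgPotential {J : Type*} {M : ℕ} (ξ : ℝ)
    (G : J → EuclideanSpace ℝ (Fin M)) (p : J) (φ : EuclideanSpace ℝ (Fin M)) : ℝ :=
  (1 / 2) * (‖φ - G p‖ ^ 2 / ξ) - (1 / 2) * (‖φ‖ ^ 2 / ξ)

/-- The scaling factor `Z(φ) = ∫_J exp(−Φ(p,φ)) dρ(p)`. -/
noncomputable def emgZ {J : Type*} [MeasurableSpace J] {M : ℕ} (ρ : Measure J) (ξ : ℝ)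
    (G : J → EuclideanSpace ℝ (Fin M)) (φ : EuclideanSpace ℝ (Fin M)) : ℝ :=
  ∫ p, Real.exp (-(emgPotential ξ G p φ)) ∂ρ

/-!
The posterior density is the Gibbs density `Z⁻¹ e^{f}` of `f = -Φ(·, φ)`, with `Z = ∫ e^{f} dρ`,
and its square root is `exp ((f - log Z) / 2)`.
For `‖φ‖ ≤ R` the potential is bounded by `K = (C²/2 + R C)/ξ`, and it moves by at most
`B = C ‖φ₁ - φ₂‖ / ξ` when the data move from `φ₂` to `φ₁`; the log normaliser then moves by at
most `B` as well, because `e^{-B} Z(φ₂) ≤ Z(φ₁) ≤ e^{B} Z(φ₂)`. Since `exp` is `e^K`-Lipschitz on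
`(-∞, K]`, the square-root densities differ pointwise by at most `e^K B`, and so does their
Hellinger distance under the probability measure `ρ`.
-/

lemma abs_exp_sub_exp_le {a b K : ℝ} (ha : a ≤ K) (hb : b ≤ K) :
    |exp a - exp b| ≤ exp K * |a - b| := by
  have key : ∀ x y : ℝ, x ≤ K → exp x - exp y ≤ exp K * |x - y| := fun x y hx => by
    have tangent : exp x * (y - x + 1) ≤ exp y :=
      calc exp x * (y - x + 1) ≤ exp x * exp (y - x) := by gcongr; exact add_one_le_exp _
        _ = exp y := by rw [← exp_add, add_sub_cancel]
    calc exp x - exp y ≤ exp x * (x - y) := by linarith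
      _ ≤ exp x * |x - y| := mul_le_mul_of_nonneg_left (le_abs_self _) (exp_pos x).le
      _ ≤ exp K * |x - y| := mul_le_mul_of_nonneg_right (exp_le_exp.2 hx) (abs_nonneg _)
  rw [abs_sub_le_iff]
  exact ⟨key a b ha, abs_sub_comm a b ▸ key b a hb⟩

lemma sqrt_inv_mul_exp {Z : ℝ} (hZ : 0 < Z) (a : ℝ) :
    √(Z⁻¹ * exp a) = exp ((a - log Z) / 2) := by
  rw [exp_half, exp_sub, exp_log hZ, div_eq_inv_mul]

section Gibbs

variable {Ω : Type*} [MeasurableSpace Ω] {μ : Measure Ω}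

lemma abs_log_integral_exp_sub_le [NeZero μ] {f g : Ω → ℝ} {B : ℝ}
    (hf : Integrable (fun ω => exp (f ω)) μ) (hg : Integrable (fun ω => exp (g ω)) μ)
    (hfg : ∀ ω, |f ω - g ω| ≤ B) :
    |log (∫ ω, exp (f ω) ∂μ) - log (∫ ω, exp (g ω) ∂μ)| ≤ B := by
  have key : ∀ {f g : Ω → ℝ}, Integrable (fun ω => exp (f ω)) μ →
      Integrable (fun ω => exp (g ω)) μ → (∀ ω, f ω - g ω ≤ B) →
      log (∫ ω, exp (f ω) ∂μ) - log (∫ ω, exp (g ω) ∂μ) ≤ B := by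
    intro f g hf hg hfg
    have : ∫ ω, exp (f ω) ∂μ ≤ exp B * ∫ ω, exp (g ω) ∂μ := by
      rw [← integral_const_mul]
      refine integral_mono hf (hg.const_mul _) fun ω => ?_
      rw [← exp_add]
      exact exp_le_exp.2 (by linarith [hfg ω])
    rw [sub_le_iff_le_add, ← log_exp B, ← log_mul (exp_pos B).ne' (integral_exp_pos hg).ne']
    exact log_le_log (integral_exp_pos hf) this
  rw [abs_sub_le_iff]
  exact ⟨key hf hg fun ω => (le_abs_self _).trans (hfg ω),
    key hg hf fun ω => (le_abs_self _).trans (abs_sub_comm (f ω) (g ω) ▸ hfg ω)⟩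

noncomputable def gibbsDensity (μ : Measure Ω) (f : Ω → ℝ) (ω : Ω) : ℝ :=
  (∫ x, exp (f x) ∂μ)⁻¹ * exp (f ω)

variable [IsProbabilityMeasure μ]

lemma abs_sqrt_gibbsDensity_sub_le {f g : Ω → ℝ} {K B : ℝ}
    (hf : AEStronglyMeasurable f μ) (hg : AEStronglyMeasurable g μ)
    (hfK : ∀ ω, |f ω| ≤ K) (hgK : ∀ ω, |g ω| ≤ K) (hfg : ∀ ω, |f ω - g ω| ≤ B) (ω : Ω) :
    |√(gibbsDensity μ f ω) - √(gibbsDensity μ g ω)| ≤ exp K * B := by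
  have integrable {h : Ω → ℝ} (hm : AEStronglyMeasurable h μ) (hK : ∀ ω, |h ω| ≤ K) :
      Integrable (fun x => exp (h x)) μ :=
    .of_bound (continuous_exp.comp_aestronglyMeasurable hm) (exp K) <| ae_of_all _ fun ω => by
      rw [norm_eq_abs, abs_exp]
      exact exp_le_exp.2 ((le_abs_self _).trans (hK ω))
  -- compare with the zero potential, whose normaliser is `1`
  have log_ge {h : Ω → ℝ} (hm : AEStronglyMeasurable h μ) (hK : ∀ ω, |h ω| ≤ K) :
      -K ≤ log (∫ x, exp (h x) ∂μ) := by
    have := abs_log_integral_exp_sub_le (g := fun _ => 0) (integrable hm hK) (integrable_const _)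
      (by simpa using hK)
    simp only [exp_zero, integral_const, probReal_univ, smul_eq_mul, mul_one,
      log_one, sub_zero] at this
    linarith [neg_abs_le (log (∫ x, exp (h x) ∂μ))]
  rw [gibbsDensity, gibbsDensity, sqrt_inv_mul_exp (integral_exp_pos (integrable hf hfK)),
    sqrt_inv_mul_exp (integral_exp_pos (integrable hg hgK))]
  refine (abs_exp_sub_exp_le (K := K) ?_ ?_).trans ?_
  · linarith [le_abs_self (f ω), hfK ω, log_ge hf hfK]
  · linarith [le_abs_self (g ω), hgK ω, log_ge hg hgK]
  gcongr
  have hlog := abs_log_integral_exp_sub_le (integrable hf hfK) (integrable hg hgK) hfg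
  calc _ = |(f ω - g ω) - (log (∫ x, exp (f x) ∂μ) - log (∫ x, exp (g x) ∂μ))| / 2 := by
        rw [← sub_div, abs_div, abs_two, sub_sub_sub_comm]
    _ ≤ (|f ω - g ω| + |log (∫ x, exp (f x) ∂μ) - log (∫ x, exp (g x) ∂μ)|) / 2 := by
        gcongr; exact abs_sub _ _
    _ ≤ B := by linarith [hfg ω]

lemma sqrt_half_integral_sq_le {u : Ω → ℝ} {ε : ℝ} (hu : ∀ ω, |u ω| ≤ ε) :
    √((1 / 2) * ∫ ω, u ω ^ 2 ∂μ) ≤ ε := by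
  obtain ⟨ω₀⟩ := nonempty_of_isProbabilityMeasure μ
  have hε : 0 ≤ ε := (abs_nonneg _).trans (hu ω₀)
  have hint : ∫ ω, u ω ^ 2 ∂μ ≤ ε ^ 2 := by
    have := norm_integral_le_of_norm_le_const (μ := μ) (f := fun ω => u ω ^ 2) <|
      ae_of_all _ fun ω => by
        rw [norm_pow, norm_eq_abs]; exact pow_le_pow_left₀ (abs_nonneg _) (hu ω) 2
    simpa using (le_abs_self _).trans this
  have hnonneg : 0 ≤ ∫ ω, u ω ^ 2 ∂μ := integral_nonneg fun ω => sq_nonneg (u ω)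
  calc √((1 / 2) * ∫ ω, u ω ^ 2 ∂μ) ≤ √(ε ^ 2) := sqrt_le_sqrt (by linarith)
    _ = ε := sqrt_sq hε

end Gibbs

section Potential

variable {J : Type*} {M : ℕ} {ξ C : ℝ} {G : J → EuclideanSpace ℝ (Fin M)}

lemma emgPotential_eq (p : J) (φ : EuclideanSpace ℝ (Fin M)) :
    emgPotential ξ G p φ = (‖G p‖ ^ 2 / 2 - inner ℝ φ (G p)) / ξ := by
  rw [emgPotential, norm_sub_sq_real]; ring

lemma emgPotential_sub_emgPotential (p : J) (φ₁ φ₂ : EuclideanSpace ℝ (Fin M)) :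
    emgPotential ξ G p φ₁ - emgPotential ξ G p φ₂ = -inner ℝ (φ₁ - φ₂) (G p) / ξ := by
  rw [emgPotential_eq, emgPotential_eq, inner_sub_left]; ring

lemma abs_emgPotential_le {p : J} {φ : EuclideanSpace ℝ (Fin M)} {R : ℝ} (hξ : 0 ≤ ξ)
    (hG : ‖G p‖ ≤ C) (hφ : ‖φ‖ ≤ R) :
    |emgPotential ξ G p φ| ≤ (C ^ 2 / 2 + R * C) / ξ := by
  rw [emgPotential_eq, abs_div, abs_of_nonneg hξ]
  gcongr
  calc |‖G p‖ ^ 2 / 2 - inner ℝ φ (G p)| ≤ ‖G p‖ ^ 2 / 2 + |inner ℝ φ (G p)| := by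
        refine (abs_sub _ _).trans_eq ?_; rw [abs_of_nonneg (by positivity)]
    _ ≤ C ^ 2 / 2 + R * C := by
        gcongr
        exact (abs_real_inner_le_norm _ _).trans
          (mul_le_mul hφ hG (norm_nonneg _) ((norm_nonneg _).trans hφ))

lemma abs_emgPotential_sub_le {p : J} (hξ : 0 ≤ ξ) (hG : ‖G p‖ ≤ C)
    (φ₁ φ₂ : EuclideanSpace ℝ (Fin M)) :
    |emgPotential ξ G p φ₁ - emgPotential ξ G p φ₂| ≤ C * ‖φ₁ - φ₂‖ / ξ := by
  rw [emgPotential_sub_emgPotential, abs_div, abs_neg, abs_of_nonneg hξ]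
  gcongr
  exact (abs_real_inner_le_norm _ _).trans (by rw [mul_comm]; gcongr)

lemma measurable_emgPotential [MeasurableSpace J] (hG : Measurable G)
    (φ : EuclideanSpace ℝ (Fin M)) : Measurable fun p => emgPotential ξ G p φ := by
  unfold emgPotential
  fun_prop

end Potential

theorem posterior_lipschitz_hellinger_general
    {J : Type*} [MeasurableSpace J] (ρ : Measure J) [IsProbabilityMeasure ρ]
    (M : ℕ) (ξ : ℝ) (hξ : 0 < ξ)
    (G : J → EuclideanSpace ℝ (Fin M)) (hGmeas : Measurable G)
    (C : ℝ) (hC : 0 < C) (hGbdd : ∀ p, ‖G p‖ ≤ C) :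
    ∀ R > (0 : ℝ), ∃ L > (0 : ℝ), ∀ φ₁ φ₂ : EuclideanSpace ℝ (Fin M),
      ‖φ₁‖ ≤ R → ‖φ₂‖ ≤ R →
      Real.sqrt ((1 / 2) * ∫ p,
          (Real.sqrt ((emgZ ρ ξ G φ₁)⁻¹ * Real.exp (-(emgPotential ξ G p φ₁))) -
            Real.sqrt ((emgZ ρ ξ G φ₂)⁻¹ * Real.exp (-(emgPotential ξ G p φ₂)))) ^ 2 ∂ρ)
        ≤ L * ((Real.sqrt ξ)⁻¹ * ‖φ₁ - φ₂‖) := by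
  intro R _
  set K := (C ^ 2 / 2 + R * C) / ξ
  refine ⟨exp K * C / √ξ, by positivity, fun φ₁ φ₂ hφ₁ hφ₂ => ?_⟩
  have hbound {φ : EuclideanSpace ℝ (Fin M)} (hφ : ‖φ‖ ≤ R) (p : J) :
      |-emgPotential ξ G p φ| ≤ K := by
    rw [abs_neg]; exact abs_emgPotential_le hξ.le (hGbdd p) hφ
  have hdensity := abs_sqrt_gibbsDensity_sub_le (μ := ρ)
    (f := fun p => -emgPotential ξ G p φ₁) (g := fun p => -emgPotential ξ G p φ₂)
    (measurable_emgPotential hGmeas φ₁).neg.aestronglyMeasurable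
    (measurable_emgPotential hGmeas φ₂).neg.aestronglyMeasurable (hbound hφ₁) (hbound hφ₂)
    fun p => by rw [neg_sub_neg, abs_sub_comm]; exact abs_emgPotential_sub_le hξ.le (hGbdd p) _ _
  calc _ ≤ exp K * (C * ‖φ₁ - φ₂‖ / ξ) := sqrt_half_integral_sq_le hdensity
    _ = exp K * C / √ξ * ((√ξ)⁻¹ * ‖φ₁ - φ₂‖) := by
        field_simp
        rw [sq_sqrt hξ.le]

/-- The posterior depends Lipschitz continuously on the data with respect to the
Hellinger metric. -/
theorem posterior_lipschitz_hellinger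
    {J : Type*} [MeasurableSpace J] (ρ : Measure J) [IsProbabilityMeasure ρ]
    (M : ℕ) (hM : 0 < M) (ξ : ℝ) (hξ : 0 < ξ)
    (G : J → EuclideanSpace ℝ (Fin M)) (hGmeas : Measurable G)
    (C : ℝ) (hC : 0 < C) (hGbdd : ∀ p, ‖G p‖ ≤ C) :
    ∀ R > (0 : ℝ), ∃ L > (0 : ℝ), ∀ φ₁ φ₂ : EuclideanSpace ℝ (Fin M),
      ‖φ₁‖ ≤ R → ‖φ₂‖ ≤ R →
      Real.sqrt ((1 / 2) * ∫ p,
          (Real.sqrt ((emgZ ρ ξ G φ₁)⁻¹ * Real.exp (-(emgPotential ξ G p φ₁))) -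
            Real.sqrt ((emgZ ρ ξ G φ₂)⁻¹ * Real.exp (-(emgPotential ξ G p φ₂)))) ^ 2 ∂ρ)
        ≤ L * ((Real.sqrt ξ)⁻¹ * ‖φ₁ - φ₂‖) :=
  posterior_lipschitz_hellinger_general ρ M ξ hξ G hGmeas C hC hGbdd
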